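/- Let φ (S×d_φ), ψ (S×d_ψ) with ψᵀψ = I, P an S×S matrix, γ ∈ ℝ, and T a d_φ×d_ψ matrix. Define f(φ) = (1/2)‖φTψᵀ − P − γPφ₀Tψᵀ‖_F² and g(φ) = (1/2)‖φT − Pψ − γPφ₀T‖_F², where φ₀ is held fixed (stop-gradient). Then ∇_φ f(φ) = (φTψᵀ − P − γPφ₀Tψᵀ)ψTᵀ = (φT − Pψ − γPφ₀T)Tᵀ = ∇_φ g(φ). -/

import Mathlib

open Matrix BigOperators

/-- Squared Frobenius norm of a real matrix. -/
noncomputable def frobSq {m n : ℕ} (A : Matrix (Fin m) (Fin n) ℝ) : ℝ :=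
  ∑ i, ∑ j, (A i j) ^ 2

lemma frobSq_expand {m n : ℕ} (B C : Matrix (Fin m) (Fin n) ℝ) (t : ℝ) :
    (1 / 2) * frobSq (B + t • C)
      = (1 / 2) * frobSq B + Matrix.trace (Cᵀ * B) * t + ((1 / 2) * frobSq C) * t ^ 2 := by
  simp only [frobSq, Matrix.trace, Matrix.diag, Matrix.mul_apply, Matrix.add_apply,
    Matrix.smul_apply, Matrix.transpose_apply, smul_eq_mul, Finset.mul_sum,
    Finset.sum_mul]
  rw [show (∑ x : Fin n, ∑ i : Fin m, C i x * B i x * t)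
      = ∑ i : Fin m, ∑ x : Fin n, C i x * B i x * t from Finset.sum_comm]
  rw [← Finset.sum_add_distrib, ← Finset.sum_add_distrib]
  refine Finset.sum_congr rfl fun i _ => ?_
  rw [← Finset.sum_add_distrib, ← Finset.sum_add_distrib]
  refine Finset.sum_congr rfl fun j _ => ?_
  ring

lemma deriv_half_frobSq {m n : ℕ} (B C : Matrix (Fin m) (Fin n) ℝ) :
    deriv (fun t : ℝ => (1 / 2) * frobSq (B + t • C)) 0 = Matrix.trace (Cᵀ * B) := by
  have h : ∀ t : ℝ, (1 / 2) * frobSq (B + t • C)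
      = (1 / 2) * frobSq B + Matrix.trace (Cᵀ * B) * t + ((1 / 2) * frobSq C) * t ^ 2 :=
    frobSq_expand B C
  rw [funext h]
  have h1 : HasDerivAt (fun t : ℝ => (1 / 2) * frobSq B + Matrix.trace (Cᵀ * B) * t
      + ((1 / 2) * frobSq C) * t ^ 2) (Matrix.trace (Cᵀ * B)) 0 := by
    have := (((hasDerivAt_id (0 : ℝ)).const_mul (Matrix.trace (Cᵀ * B))).const_add
      ((1 / 2) * frobSq B)).add (((hasDerivAt_pow 2 (0 : ℝ)).const_mul ((1 / 2) * frobSq C)))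
    simpa [Pi.add_def] using this
  exact h1.deriv

/-- Gradient matching for the TD losses with stop-gradient target (`φ₀` held fixed):
with `ψᵀψ = I`, the losses `f(φ) = ½‖φTψᵀ - P - γPφ₀Tψᵀ‖_F²` and
`g(φ) = ½‖φT - Pψ - γPφ₀T‖_F²` have identical gradients in `φ`, namely
`(φTψᵀ - P - γPφ₀Tψᵀ)ψTᵀ = (φT - Pψ - γPφ₀T)Tᵀ`. -/
theorem stmt14 {S dφ dψ : ℕ} (φ φ₀ : Matrix (Fin S) (Fin dφ) ℝ)
    (ψ : Matrix (Fin S) (Fin dψ) ℝ) (hψ : ψᵀ * ψ = 1)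
    (P : Matrix (Fin S) (Fin S) ℝ) (γ : ℝ) (T : Matrix (Fin dφ) (Fin dψ) ℝ) :
    (φ * T * ψᵀ - P - γ • (P * φ₀ * T * ψᵀ)) * ψ * Tᵀ
      = (φ * T - P * ψ - γ • (P * φ₀ * T)) * Tᵀ ∧
    ∀ H : Matrix (Fin S) (Fin dφ) ℝ,
      deriv (fun t : ℝ =>
          (1 / 2) * frobSq ((φ + t • H) * T * ψᵀ - P - γ • (P * φ₀ * T * ψᵀ))) 0
        = Matrix.trace (Hᵀ * ((φ * T * ψᵀ - P - γ • (P * φ₀ * T * ψᵀ)) * ψ * Tᵀ)) ∧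
      deriv (fun t : ℝ =>
          (1 / 2) * frobSq ((φ + t • H) * T - P * ψ - γ • (P * φ₀ * T))) 0
        = Matrix.trace (Hᵀ * ((φ * T - P * ψ - γ • (P * φ₀ * T)) * Tᵀ)) := by
  have key : ∀ X : Matrix (Fin S) (Fin dψ) ℝ, X * ψᵀ * ψ = X := by
    intro X; rw [Matrix.mul_assoc, hψ, Matrix.mul_one]
  have halg : (φ * T * ψᵀ - P - γ • (P * φ₀ * T * ψᵀ)) * ψ * Tᵀ
      = (φ * T - P * ψ - γ • (P * φ₀ * T)) * Tᵀ := by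
    rw [Matrix.sub_mul, Matrix.sub_mul, Matrix.sub_mul, Matrix.sub_mul,
      Matrix.smul_mul, Matrix.smul_mul, key (φ * T), key (P * φ₀ * T)]
    simp [Matrix.sub_mul, Matrix.smul_mul, Matrix.mul_assoc]
  refine ⟨halg, fun H => ?_⟩
  constructor
  · have hfun : ∀ t : ℝ, (φ + t • H) * T * ψᵀ - P - γ • (P * φ₀ * T * ψᵀ)
        = (φ * T * ψᵀ - P - γ • (P * φ₀ * T * ψᵀ)) + t • (H * T * ψᵀ) := by
      intro t
      simp only [Matrix.add_mul, Matrix.smul_mul]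
      abel
    simp only [hfun]
    rw [deriv_half_frobSq]
    rw [Matrix.transpose_mul, Matrix.transpose_mul, Matrix.transpose_transpose,
      ← Matrix.mul_assoc ψ Tᵀ Hᵀ, Matrix.trace_mul_cycle, Matrix.trace_mul_comm]
    simp only [Matrix.mul_assoc]
  · have hfun : ∀ t : ℝ, (φ + t • H) * T - P * ψ - γ • (P * φ₀ * T)
        = (φ * T - P * ψ - γ • (P * φ₀ * T)) + t • (H * T) := by
      intro t
      simp only [Matrix.add_mul, Matrix.smul_mul]
      abel
    simp only [hfun]
    rw [deriv_half_frobSq]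
    rw [Matrix.transpose_mul, Matrix.trace_mul_cycle, Matrix.trace_mul_comm]
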